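/- arXiv:1804.06684 — 9 statements merged into one kernel-verified Lean document; each statement's English description precedes it below -/
import Mathlib

section
/- Let G be a finite nilpotent group that has an ES-partition for a subgroup S. Then S is normal in G. -/
/-!
Argue by induction on `|G|`. Since the components cover `G` and a group is never the union of
two proper subgroups, at least three maximal subgroups contain `S`, so two of them, `M ≠ M'`, are
either both components or both not. If both are components, `S = M ⊓ M'` is an intersection of
maximal, hence normal, subgroups of the nilpotent group `G`. If neither is, the partition
restricts to a strict `S`-partition of `M` and of `M'`, so by induction both normalize `S`, and
then so does `M ⊔ M' = G`.
-/

/-- A strict `S`-partition of a group `G`: a finite collection of at least two proper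
subgroups of `G` covering `G`, any two distinct members of which intersect exactly in `S`. -/
def IsStrictPartition {G : Type*} [Group G] (S : Subgroup G) (P : Finset (Subgroup G)) : Prop :=
  2 ≤ P.card ∧ (∀ H ∈ P, H ≠ ⊤) ∧ (∀ g : G, ∃ H ∈ P, g ∈ H) ∧
    ∀ H ∈ P, ∀ K ∈ P, H ≠ K → H ⊓ K = S

/-- An `ES`-partition: a strict `S`-partition all of whose components have the same order. -/
def IsESPartition {G : Type*} [Group G] (S : Subgroup G) (P : Finset (Subgroup G)) : Prop :=
  IsStrictPartition S P ∧ ∀ H ∈ P, ∀ K ∈ P, Nat.card H = Nat.card K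

namespace Subgroup

variable {G : Type*} [Group G]

theorem exists_notMem_and_notMem_of_ne_top {A B : Subgroup G} (hA : A ≠ ⊤) (hB : B ≠ ⊤) :
    ∃ g, g ∉ A ∧ g ∉ B := by
  obtain ⟨a, ha⟩ := SetLike.exists_not_mem_of_ne_top A hA
  obtain ⟨b, hb⟩ := SetLike.exists_not_mem_of_ne_top B hB
  by_cases haB : a ∈ B
  · by_cases hbA : b ∈ A
    · refine ⟨a * b, fun hab => ha ?_, fun hab => hb ?_⟩
      · simpa using mul_mem hab (inv_mem hbA)
      · simpa using mul_mem (inv_mem haB) hab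
    · exact ⟨b, hbA, hb⟩
  · exact ⟨a, ha, haB⟩

theorem exists_three_ne_of_forall_exists_mem {𝓗 : Set (Subgroup G)}
    (hproper : ∀ H ∈ 𝓗, H ≠ ⊤) (hcover : ∀ g : G, ∃ H ∈ 𝓗, g ∈ H) :
    ∃ H₁ ∈ 𝓗, ∃ H₂ ∈ 𝓗, ∃ H₃ ∈ 𝓗, H₁ ≠ H₂ ∧ H₁ ≠ H₃ ∧ H₂ ≠ H₃ := by
  obtain ⟨H₁, h₁, -⟩ := hcover 1
  obtain ⟨g, hg₁⟩ := SetLike.exists_not_mem_of_ne_top H₁ (hproper H₁ h₁)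
  obtain ⟨H₂, h₂, hg₂⟩ := hcover g
  obtain ⟨x, hx₁, hx₂⟩ := exists_notMem_and_notMem_of_ne_top (hproper H₁ h₁) (hproper H₂ h₂)
  obtain ⟨H₃, h₃, hx₃⟩ := hcover x
  exact ⟨H₁, h₁, H₂, h₂, H₃, h₃, fun h => hg₁ (h ▸ hg₂), fun h => hx₁ (h ▸ hx₃),
    fun h => hx₂ (h ▸ hx₃)⟩

theorem card_lt_of_ne_top [Finite G] {M : Subgroup G} (hM : M ≠ ⊤) : Nat.card M < Nat.card G := by
  rw [← M.index_mul_card]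
  exact lt_mul_of_one_lt_left Nat.card_pos (one_lt_index_of_ne_top hM)

end Subgroup

namespace IsStrictPartition

open Subgroup

variable {G : Type*} [Group G] {S : Subgroup G} {P : Finset (Subgroup G)}

theorem le_of_mem (hP : IsStrictPartition S P) {H : Subgroup G} (hH : H ∈ P) : S ≤ H := by
  obtain ⟨K, hK, hKH⟩ := P.exists_mem_ne hP.1 H
  rw [← hP.2.2.2 H hH K hK hKH.symm]
  exact inf_le_left

open scoped Classical in
theorem subgroupOf (hP : IsStrictPartition S P) {M : Subgroup G} (hM : ∀ H ∈ P, ¬M ≤ H) :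
    IsStrictPartition (S.subgroupOf M) (P.image (·.subgroupOf M)) := by
  obtain ⟨-, -, hcover, hinter⟩ := hP
  have hproper : ∀ X ∈ P.image (·.subgroupOf M), X ≠ ⊤ := by
    simp only [Finset.mem_image]
    rintro _ ⟨H, hH, rfl⟩
    exact fun h => hM H hH (subgroupOf_eq_top.mp h)
  have hcover' : ∀ m : M, ∃ X ∈ P.image (·.subgroupOf M), m ∈ X := fun m => by
    obtain ⟨H, hH, hm⟩ := hcover m
    exact ⟨_, Finset.mem_image_of_mem _ hH, mem_subgroupOf.mpr hm⟩
  refine ⟨?_, hproper, hcover', ?_⟩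
  · obtain ⟨X, hX, Y, hY, -, -, hXY, -⟩ := exists_three_ne_of_forall_exists_mem
      (𝓗 := (P.image (·.subgroupOf M) : Set (Subgroup M))) hproper hcover'
    exact Finset.one_lt_card.mpr ⟨X, hX, Y, hY, hXY⟩
  · simp only [Finset.mem_image]
    rintro _ ⟨H, hH, rfl⟩ _ ⟨K, hK, rfl⟩ hHK
    rw [← hinter H hH K hK (fun h => hHK (h ▸ rfl))]
    exact (comap_inf H K M.subtype).symm

variable [Finite G] [Group.IsNilpotent G]

theorem normal_of_forall_isCoatom_le_normalizer (hP : IsStrictPartition S P)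
    (hnorm : ∀ M : Subgroup G, IsCoatom M → S ≤ M → M ∉ P → M ≤ normalizer (S : Set G)) :
    S.Normal := by
  have hcover : ∀ g : G, ∃ M ∈ {M : Subgroup G | IsCoatom M ∧ S ≤ M}, g ∈ M := fun g => by
    obtain ⟨H, hH, hg⟩ := hP.2.2.1 g
    obtain ⟨M, hM, hHM⟩ := (eq_top_or_exists_le_coatom H).resolve_left (hP.2.1 H hH)
    exact ⟨M, ⟨hM, (hP.le_of_mem hH).trans hHM⟩, hHM hg⟩
  obtain ⟨M₁, ⟨hM₁, hS₁⟩, M₂, ⟨hM₂, hS₂⟩, M₃, ⟨hM₃, hS₃⟩, h₁₂, h₁₃, h₂₃⟩ :=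
    exists_three_ne_of_forall_exists_mem (fun M hM => hM.1.1) hcover
  have of_mem {M M' : Subgroup G} (hM : IsCoatom M) (hM' : IsCoatom M') (hMP : M ∈ P)
      (hM'P : M' ∈ P) (hne : M ≠ M') : S.Normal := by
    have := Group.normalizerCondition_of_isNilpotent.normal_of_coatom M hM
    have := Group.normalizerCondition_of_isNilpotent.normal_of_coatom M' hM'
    exact hP.2.2.2 M hMP M' hM'P hne ▸ normal_inf_normal M M'
  have of_notMem {M M' : Subgroup G} (hM : IsCoatom M) (hM' : IsCoatom M') (hSM : S ≤ M)
      (hSM' : S ≤ M') (hMP : M ∉ P) (hM'P : M' ∉ P) (hne : M ≠ M') : S.Normal := by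
    rw [← normalizer_eq_top_iff, eq_top_iff, ← hM.sup_eq_top_of_ne hM' hne]
    exact sup_le (hnorm M hM hSM hMP) (hnorm M' hM' hSM' hM'P)
  -- two of `M₁, M₂, M₃` are on the same side of `P`
  by_cases h₁ : M₁ ∈ P <;> by_cases h₂ : M₂ ∈ P <;> by_cases h₃ : M₃ ∈ P
  all_goals first
    | exact of_mem hM₁ hM₂ h₁ h₂ h₁₂
    | exact of_mem hM₁ hM₃ h₁ h₃ h₁₃
    | exact of_mem hM₂ hM₃ h₂ h₃ h₂₃
    | exact of_notMem hM₁ hM₂ hS₁ hS₂ h₁ h₂ h₁₂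
    | exact of_notMem hM₁ hM₃ hS₁ hS₃ h₁ h₃ h₁₃
    | exact of_notMem hM₂ hM₃ hS₂ hS₃ h₂ h₃ h₂₃

theorem normal (hP : IsStrictPartition S P) : S.Normal := by
  induction hn : Nat.card G using Nat.strong_induction_on generalizing G with
  | _ n ih =>
    refine hP.normal_of_forall_isCoatom_le_normalizer fun M hM hSM hMP => ?_
    have hPM : ∀ H ∈ P, ¬M ≤ H := fun H hH hMH =>
      (hM.le_iff.mp hMH).elim (hP.2.1 H hH) fun h => hMP (h ▸ hH)
    have : (S.subgroupOf M).Normal :=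
      ih _ (hn ▸ card_lt_of_ne_top hM.1) (hP.subgroupOf hPM) rfl
    exact le_normalizer_of_normal_subgroupOf hSM

end IsStrictPartition

theorem normal_of_ESPartition_of_nilpotent {G : Type*} [Group G] [Finite G]
    [Group.IsNilpotent G] (S : Subgroup G) (P : Finset (Subgroup G))
    (hP : IsESPartition S P) : S.Normal :=
  hP.1.normal
end

section
/- Let G be a finite group which has an ES-partition {H_1, …, H_n} for some subgroup S. Then for every i with 1 ≤ i ≤ n, the set of prime divisors of |H_i| equals the set of prime divisors of |G|. -/
theorem primeFactors_eq_of_mem_ESPartition {G : Type*} [Group G] [Finite G]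
    (S : Subgroup G) (P : Finset (Subgroup G)) (hP : IsESPartition S P) :
    ∀ H ∈ P, (Nat.card H).primeFactors = (Nat.card G).primeFactors := by
  intro H hH
  obtain ⟨⟨_, _, hcover, _⟩, hcard⟩ := hP
  have hG0 : Nat.card G ≠ 0 := Nat.card_pos.ne'
  apply Finset.Subset.antisymm
  · exact Nat.primeFactors_mono (Subgroup.card_subgroup_dvd_card H) hG0
  · intro p hp
    have hpp : p.Prime := Nat.prime_of_mem_primeFactors hp
    have hpd : p ∣ Nat.card G := Nat.dvd_of_mem_primeFactors hp
    haveI : Fact p.Prime := ⟨hpp⟩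
    haveI := Fintype.ofFinite G
    obtain ⟨g, hg⟩ := exists_prime_orderOf_dvd_card (G := G) p
      (by rwa [← Nat.card_eq_fintype_card])
    obtain ⟨K, hK, hgK⟩ := hcover g
    have : p ∣ Nat.card K := by
      rw [← hg]
      exact Subgroup.orderOf_dvd_natCard K hgK
    rw [hcard H hH K hK]
    exact Nat.mem_primeFactors.2 ⟨hpp, this, Nat.card_pos.ne'⟩
end

section
/- Let G be a finite group whose order is squarefree. Then G has no ES-partition for any subgroup S of G. -/
theorem no_ESPartition_of_squarefree {G : Type*} [Group G] [Finite G]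
    (hG : Squarefree (Nat.card G)) :
    ∀ (S : Subgroup G) (P : Finset (Subgroup G)), ¬ IsESPartition S P := by
  intro S P hES
  obtain ⟨⟨hcard, hproper, hcover, hint⟩, heq⟩ := hES
  set g := Nat.card G with hg
  -- pick a member H₀ of P
  obtain ⟨H₀, hH₀P, -⟩ := hcover 1
  set m := Nat.card H₀ with hm
  have hdvd : m ∣ g := Subgroup.card_subgroup_dvd_card H₀
  have hne : m ≠ g := by
    intro h
    exact hproper H₀ hH₀P (Subgroup.eq_top_of_card_eq H₀ h)
  have hgpos : 0 < g := Nat.card_pos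
  have hq : g / m ≠ 1 := by
    intro h
    apply hne
    have := Nat.div_mul_cancel hdvd
    rw [h, one_mul] at this
    exact this
  obtain ⟨p, hp, hpdvd⟩ := Nat.exists_prime_and_dvd hq
  have hpg : p ∣ g := hpdvd.trans (Nat.div_dvd_of_dvd hdvd)
  haveI := Fact.mk hp
  obtain ⟨x, hx⟩ := exists_prime_orderOf_dvd_card' p hpg
  obtain ⟨H, hHP, hxH⟩ := hcover x
  have hcardH : Nat.card H = m := heq H hHP H₀ hH₀P
  have hord : orderOf x ∣ m := by
    have h1 : orderOf (⟨x, hxH⟩ : H) ∣ Nat.card H := orderOf_dvd_natCard _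
    rw [hcardH] at h1
    rwa [Subgroup.orderOf_mk] at h1
  have hpm : p ∣ m := hx ▸ hord
  have : p * p ∣ g := by
    have : p * p ∣ m * (g / m) := mul_dvd_mul hpm hpdvd
    rwa [Nat.mul_div_cancel' hdvd] at this
  exact hp.not_isUnit (hG p this)
end

section
/- Let G be a finite group which has an ES-partition {H_1, …, H_n} for a subgroup S, let H be a finite group, and let φ : G → Aut(H) be an action of G on H. Form the semidirect product H ⋊_φ G. Then the subgroups K_i = {(h, g) : h ∈ H, g ∈ H_i} (for 1 ≤ i ≤ n) form an ET-partition of H ⋊_φ G, where T = {(h, s) : h ∈ H, s ∈ S}. -/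
private lemma card_comap_rightHom {G H : Type*} [Group G] [Group H]
    (φ : G →* MulAut H) (K : Subgroup G) :
    Nat.card (Subgroup.comap (SemidirectProduct.rightHom : H ⋊[φ] G →* G) K) =
      Nat.card H * Nat.card K := by
  have e : (Subgroup.comap (SemidirectProduct.rightHom : H ⋊[φ] G →* G) K) ≃ H × K :=
    { toFun := fun x => (x.1.left, ⟨x.1.right, x.2⟩)
      invFun := fun p => ⟨⟨p.1, p.2.1⟩, p.2.2⟩
      left_inv := fun x => rfl
      right_inv := fun p => rfl }
  rw [Nat.card_congr e, Nat.card_prod]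

open scoped Classical in
theorem ESPartition_semidirectProduct {G H : Type*} [Group G] [Finite G] [Group H] [Finite H]
    (φ : G →* MulAut H) (S : Subgroup G) (P : Finset (Subgroup G))
    (hP : IsESPartition S P) :
    IsESPartition
      (Subgroup.comap (SemidirectProduct.rightHom : H ⋊[φ] G →* G) S)
      (P.image fun K => Subgroup.comap (SemidirectProduct.rightHom : H ⋊[φ] G →* G) K) := by
  obtain ⟨⟨hcard, hprop, hcover, hinter⟩, hsame⟩ := hP
  have hsurj : Function.Surjective (SemidirectProduct.rightHom : H ⋊[φ] G →* G) :=
    SemidirectProduct.rightHom_surjective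
  have hinj := Subgroup.comap_injective (f := (SemidirectProduct.rightHom : H ⋊[φ] G →* G)) hsurj
  have himg : (P.image fun K => Subgroup.comap (SemidirectProduct.rightHom : H ⋊[φ] G →* G) K).card
      = P.card := Finset.card_image_of_injective P hinj
  refine ⟨⟨by rw [himg]; exact hcard, ?_, ?_, ?_⟩, ?_⟩
  · rintro K hK
    simp only [Finset.mem_image] at hK
    obtain ⟨K', hK', rfl⟩ := hK
    intro h
    apply hprop K' hK'
    apply hinj
    rw [h, Subgroup.comap_top]
  · intro x
    obtain ⟨K', hK', hx⟩ := hcover x.right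
    refine ⟨_, Finset.mem_image_of_mem _ hK', hx⟩
  · rintro K hK L hL hne
    simp only [Finset.mem_image] at hK hL
    obtain ⟨K', hK', rfl⟩ := hK
    obtain ⟨L', hL', rfl⟩ := hL
    rw [← Subgroup.comap_inf, hinter K' hK' L' hL' (fun h => hne (by rw [h]))]
  · rintro K hK L hL
    simp only [Finset.mem_image] at hK hL
    obtain ⟨K', hK', rfl⟩ := hK
    obtain ⟨L', hL', rfl⟩ := hL
    rw [card_comap_rightHom, card_comap_rightHom, hsame K' hK' L' hL']
end

section
/- Let G be a finite nilpotent group. Then every non-cyclic subgroup H of G has an ES-partition for some subgroup S of H. -/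
/-!
In a nilpotent group every maximal subgroup `M` is normal, and `G ⧸ M` is then cyclic, so the
derived subgroup lies in the Frattini subgroup. Since Frattini elements are non-generators, a
non-cyclic finite nilpotent group `H` has a non-cyclic abelianization, which by the structure
theorem maps onto `C_p × C_p` for a prime `p` dividing the orders of two of its cyclic factors.
The `p + 1` subgroups of order `p` of `C_p × C_p` form an ES-partition with trivial intersection,
and their preimages in `H` form an ES-partition with `S` the kernel of `H → C_p × C_p`.
-/

open scoped Function

section Frattini

variable {K : Type*} [Group K]

open QuotientGroup in
theorem QuotientGroup.map_mk'_eq_top_iff (N : Subgroup K) [N.Normal] (H : Subgroup K) :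
    H.map (mk' N) = ⊤ ↔ H ⊔ N = ⊤ := by
  rw [← (Subgroup.comap_injective (mk'_surjective N)).eq_iff, Subgroup.comap_map_eq, ker_mk',
    Subgroup.comap_top]

theorem isCyclic_quotient_of_isCoatom {M : Subgroup K} [M.Normal] (hM : IsCoatom M) :
    IsCyclic (K ⧸ M) := by
  obtain ⟨g, -, hg⟩ := SetLike.exists_of_lt hM.1.lt_top
  refine isCyclic_iff_exists_zpowers_eq_top.mpr ⟨QuotientGroup.mk' M g, ?_⟩
  rw [← MonoidHom.map_zpowers, QuotientGroup.map_mk'_eq_top_iff]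
  exact hM.2 _ (right_lt_sup.mpr fun hle => hg (hle (Subgroup.mem_zpowers g)))

theorem isCyclic_of_isCyclic_quotient_frattini [Finite K] (h : IsCyclic (K ⧸ frattini K)) :
    IsCyclic K := by
  obtain ⟨a, ha⟩ := isCyclic_iff_exists_zpowers_eq_top.mp h
  obtain ⟨g, rfl⟩ := QuotientGroup.mk'_surjective (frattini K) a
  rw [← MonoidHom.map_zpowers, QuotientGroup.map_mk'_eq_top_iff] at ha
  exact isCyclic_iff_exists_zpowers_eq_top.mpr ⟨g, frattini_nongenerating ha⟩

theorem commutator_le_frattini [Group.IsNilpotent K] : commutator K ≤ frattini K := by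
  refine le_iInf₂ fun M hM => ?_
  have : M.Normal :=
    Subgroup.NormalizerCondition.normal_of_coatom M Group.normalizerCondition_of_isNilpotent hM
  have := isCyclic_quotient_of_isCoatom hM
  exact Subgroup.Normal.quotient_commutative_iff_commutator_le.mp inferInstance

theorem not_isCyclic_abelianization [Finite K] [Group.IsNilpotent K] (h : ¬IsCyclic K) :
    ¬IsCyclic (Abelianization K) := fun (_ : IsCyclic (K ⧸ commutator K)) =>
  h <| isCyclic_of_isCyclic_quotient_frattini <| isCyclic_of_surjective
    (QuotientGroup.map _ _ (MonoidHom.id K) commutator_le_frattini)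
    (QuotientGroup.map_surjective_of_surjective _ _ _ QuotientGroup.mk_surjective _)

end Frattini

theorem isCyclic_pi_of_pairwise_coprime {ι : Type*} [Fintype ι] {M : ι → Type*}
    [∀ i, CommGroup (M i)] [∀ i, Finite (M i)] [∀ i, IsCyclic (M i)]
    (hcop : Pairwise (Nat.Coprime on fun i => Nat.card (M i))) : IsCyclic (∀ i, M i) := by
  refine IsCyclic.of_exponent_eq_card ?_
  simp only [Monoid.exponent_pi, IsCyclic.exponent_eq_card, Nat.card_pi]
  exact Finset.lcm_eq_prod (hcop.set_pairwise _)

theorem CommGroup.exists_surjective_zmod_prod_of_not_isCyclic {A : Type*} [CommGroup A]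
    [Finite A] (h : ¬IsCyclic A) : ∃ p : ℕ, p.Prime ∧
      ∃ φ : A →* Multiplicative (ZMod p) × Multiplicative (ZMod p), Function.Surjective φ := by
  classical
  obtain ⟨ι, _, n, hn, ⟨e⟩⟩ := CommGroup.equiv_prod_multiplicative_zmod_of_finite A
  have : ∀ i, NeZero (n i) := fun i => ⟨(zero_lt_one.trans (hn i)).ne'⟩
  obtain ⟨i, j, hij, hnij⟩ : ∃ i j, i ≠ j ∧ ¬ (n i).Coprime (n j) := by
    by_contra! hcop
    have := isCyclic_pi_of_pairwise_coprime (M := fun i => Multiplicative (ZMod (n i)))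
      fun i j hij => show (Nat.card (ZMod (n i))).Coprime (Nat.card (ZMod (n j))) by
        rw [Nat.card_zmod, Nat.card_zmod]
        exact hcop i j hij
    exact h (isCyclic_of_surjective e.symm e.symm.surjective)
  obtain ⟨p, hp, hpn⟩ := Nat.exists_prime_and_dvd hnij
  have hpi := hpn.trans (Nat.gcd_dvd_left _ _)
  have hpj := hpn.trans (Nat.gcd_dvd_right _ _)
  let reduce (k : ι) (hk : p ∣ n k) :
      (∀ i, Multiplicative (ZMod (n i))) →* Multiplicative (ZMod p) :=
    (ZMod.castHom hk (ZMod p)).toAddMonoidHom.toMultiplicative.comp (Pi.evalMonoidHom _ k)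
  refine ⟨p, hp, ((reduce i hpi).prod (reduce j hpj)).comp e, ?_⟩
  rintro ⟨a, b⟩
  obtain ⟨x, hx⟩ := ZMod.castHom_surjective hpi a.toAdd
  obtain ⟨y, hy⟩ := ZMod.castHom_surjective hpj b.toAdd
  refine ⟨e.symm (Pi.mulSingle i (.ofAdd x) * Pi.mulSingle j (.ofAdd y)), ?_⟩
  simp [reduce, hij, hij.symm, hx, hy]

section Partition

variable {K T : Type*} [Group K] [Group T]

theorem IsStrictPartition.comap {S : Subgroup T} {P : Finset (Subgroup T)}
    (h : IsStrictPartition S P) {φ : K →* T} (hφ : Function.Surjective φ) :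
    IsStrictPartition (S.comap φ) (P.map ⟨Subgroup.comap φ, Subgroup.comap_injective hφ⟩) := by
  obtain ⟨hcard, hproper, hcover, hinter⟩ := h
  refine ⟨by rwa [Finset.card_map], ?_, fun g => ?_, ?_⟩
  · simp only [Finset.forall_mem_map, Function.Embedding.coeFn_mk]
    intro L hL htop
    exact hproper L hL (Subgroup.comap_injective hφ (by rw [htop, Subgroup.comap_top]))
  · obtain ⟨L, hL, hg⟩ := hcover (φ g)
    exact ⟨_, Finset.mem_map_of_mem _ hL, hg⟩
  · simp only [Finset.forall_mem_map, Function.Embedding.coeFn_mk]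
    intro L₁ hL₁ L₂ hL₂ hne
    rw [← Subgroup.comap_inf, hinter L₁ hL₁ L₂ hL₂ fun h => hne (h ▸ rfl)]

theorem IsESPartition.comap [Finite K] {S : Subgroup T} {P : Finset (Subgroup T)}
    (h : IsESPartition S P) {φ : K →* T} (hφ : Function.Surjective φ) :
    IsESPartition (S.comap φ) (P.map ⟨Subgroup.comap φ, Subgroup.comap_injective hφ⟩) := by
  have : Finite T := Finite.of_surjective φ hφ
  refine ⟨h.1.comap hφ, ?_⟩
  simp only [Finset.forall_mem_map, Function.Embedding.coeFn_mk]
  intro L₁ hL₁ L₂ hL₂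
  have hindex : L₁.index = L₂.index := Nat.eq_of_mul_eq_mul_left (Nat.card_pos (α := L₁)) <| by
    rw [Subgroup.card_mul_index, h.2 L₁ hL₁ L₂ hL₂, Subgroup.card_mul_index]
  refine Nat.eq_of_mul_eq_mul_right (Nat.pos_of_ne_zero (L₁.comap φ).index_ne_zero_of_finite) ?_
  rw [Subgroup.card_mul_index, Subgroup.index_comap_of_surjective _ hφ, hindex,
    ← Subgroup.index_comap_of_surjective _ hφ, Subgroup.card_mul_index]

theorem Subgroup.inf_eq_bot_of_card_eq_prime {p : ℕ} (hp : p.Prime) {L₁ L₂ : Subgroup T}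
    (h₁ : Nat.card L₁ = p) (h₂ : Nat.card L₂ = p) (hne : L₁ ≠ L₂) : L₁ ⊓ L₂ = ⊥ := by
  have : Finite L₁ := Nat.finite_of_card_ne_zero (h₁ ▸ hp.ne_zero)
  have : Finite L₂ := Nat.finite_of_card_ne_zero (h₂ ▸ hp.ne_zero)
  rcases (Nat.dvd_prime hp).mp (h₁ ▸ Subgroup.card_dvd_of_le inf_le_left) with h | h
  · exact Subgroup.card_eq_one.mp h
  · exact absurd ((Subgroup.eq_of_le_of_card_ge inf_le_left (h₁.trans h.symm).le).symm.trans
      (Subgroup.eq_of_le_of_card_ge inf_le_right (h₂.trans h.symm).le)) hne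

theorem exists_isESPartition_bot_of_pow_prime_eq_one [Finite T] {p : ℕ} (hp : p.Prime)
    (hT : ∀ t : T, t ^ p = 1) (hnc : ¬IsCyclic T) :
    ∃ P : Finset (Subgroup T), IsESPartition ⊥ P := by
  have : Fact p.Prime := ⟨hp⟩
  have hzpowers (t : T) (ht : t ≠ 1) : Nat.card (Subgroup.zpowers t) = p := by
    rw [Nat.card_zpowers, orderOf_eq_prime (hT t) ht]
  have hout (x : T) : ∃ y, y ∉ Subgroup.zpowers x := by
    by_contra! h
    exact hnc ⟨x, h⟩
  let P := (Set.toFinite {L : Subgroup T | Nat.card L = p}).toFinset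
  have hP (L : Subgroup T) : L ∈ P ↔ Nat.card L = p := Set.Finite.mem_toFinset _
  obtain ⟨x, hx⟩ := hout 1
  obtain ⟨y, hy⟩ := hout x
  have hx1 : x ≠ 1 := by simpa using hx
  have hy1 : y ≠ 1 := fun h => hy (h ▸ Subgroup.one_mem _)
  have hcard : 2 ≤ P.card := Finset.one_lt_card.mpr ⟨_, (hP _).mpr (hzpowers x hx1), _,
    (hP _).mpr (hzpowers y hy1), fun h => hy (h ▸ Subgroup.mem_zpowers y)⟩
  have hproper (L : Subgroup T) (hL : L ∈ P) : L ≠ ⊤ := by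
    rintro rfl
    exact hnc (isCyclic_of_prime_card (Subgroup.card_top.symm.trans ((hP ⊤).mp hL)))
  have hcover (g : T) : ∃ L ∈ P, g ∈ L := by
    by_cases hg : g = 1
    · exact ⟨_, (hP _).mpr (hzpowers x hx1), hg ▸ Subgroup.one_mem _⟩
    · exact ⟨_, (hP _).mpr (hzpowers g hg), Subgroup.mem_zpowers g⟩
  refine ⟨P, ⟨hcard, hproper, hcover, fun L₁ hL₁ L₂ hL₂ => ?_⟩, fun L₁ hL₁ L₂ hL₂ => ?_⟩
  · exact Subgroup.inf_eq_bot_of_card_eq_prime hp ((hP L₁).mp hL₁) ((hP L₂).mp hL₂)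
  · exact ((hP L₁).mp hL₁).trans ((hP L₂).mp hL₂).symm

theorem exists_isESPartition_bot_zmod_prod {p : ℕ} (hp : p.Prime) :
    ∃ P : Finset (Subgroup (Multiplicative (ZMod p) × Multiplicative (ZMod p))),
      IsESPartition ⊥ P := by
  have : NeZero p := ⟨hp.ne_zero⟩
  have hcard : Nat.card (Multiplicative (ZMod p)) = p := Nat.card_zmod p
  have hpow (x : Multiplicative (ZMod p)) : x ^ p = 1 := by
    simpa only [hcard] using pow_card_eq_one' (x := x)
  refine exists_isESPartition_bot_of_pow_prime_eq_one hp
    (fun t => Prod.ext (hpow t.1) (hpow t.2)) ?_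
  rw [Group.isCyclic_prod_iff, hcard, Nat.coprime_self]
  exact fun h => hp.ne_one h.2.2

end Partition

theorem ESPartition_of_nilpotent {G : Type*} [Group G] [Finite G] [Group.IsNilpotent G] :
    ∀ H : Subgroup G, ¬ IsCyclic H →
      ∃ (S : Subgroup H) (P : Finset (Subgroup H)), IsESPartition S P := by
  intro H hH
  obtain ⟨p, hp, φ, hφ⟩ :=
    CommGroup.exists_surjective_zmod_prod_of_not_isCyclic (not_isCyclic_abelianization hH)
  obtain ⟨P, hP⟩ := exists_isESPartition_bot_zmod_prod hp
  exact ⟨_, _, hP.comap (φ := φ.comp Abelianization.of) (hφ.comp QuotientGroup.mk_surjective)⟩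
end

section
/- Let p be a prime and let P be a finite non-cyclic p-group. Then P has an E(Φ(P))-partition, where Φ(P) is the Frattini subgroup of P. -/
open Subgroup

lemma aux_isCyclic_of_zpowers_eq_top {G : Type*} [Group G] {g : G}
    (h : Subgroup.zpowers g = ⊤) : IsCyclic G :=
  ⟨⟨g, fun y => by
    have hy : y ∈ (⊤ : Subgroup G) := Subgroup.mem_top y
    rwa [← h] at hy⟩⟩

section Aux

variable {p : ℕ} {P : Type*} [Group P] [Finite P]

/-- A coatom (maximal subgroup) of a finite `p`-group is normal. -/
lemma aux_coatom_normal (hp : p.Prime) (hP : IsPGroup p P) {M : Subgroup P}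
    (hM : IsCoatom M) : M.Normal := by
  haveI : Fact p.Prime := ⟨hp⟩
  haveI := hP.isNilpotent
  exact Subgroup.NormalizerCondition.normal_of_coatom M normalizerCondition_of_isNilpotent hM

/-- A coatom of a finite `p`-group has index `p`. -/
lemma aux_coatom_index (hp : p.Prime) (hP : IsPGroup p P) {M : Subgroup P}
    (hM : IsCoatom M) : M.index = p := by
  haveI : Fact p.Prime := ⟨hp⟩
  haveI := aux_coatom_normal hp hP hM
  set Q := P ⧸ M with hQdef
  have hsurj : Function.Surjective (QuotientGroup.mk' M) := QuotientGroup.mk'_surjective M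
  have hQ : IsPGroup p Q := hP.to_quotient M
  -- subgroups of Q are ⊥ or ⊤
  have htriv : ∀ H : Subgroup Q, H = ⊥ ∨ H = ⊤ := by
    intro H
    have hle : M ≤ H.comap (QuotientGroup.mk' M) := fun x hx => by
      have h1 : QuotientGroup.mk' M x = 1 := (QuotientGroup.eq_one_iff x).mpr hx
      simp [Subgroup.mem_comap, h1, Subgroup.one_mem]
    rcases hle.lt_or_eq with h | h
    · right
      apply Subgroup.comap_injective hsurj
      rw [comap_top]
      exact hM.2 _ h
    · left
      apply Subgroup.comap_injective hsurj
      rw [← h, MonoidHom.comap_bot, QuotientGroup.ker_mk']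
  -- Q nontrivial
  have hQnt : Nontrivial Q := by
    obtain ⟨x, hx⟩ : ∃ x, x ∉ M := by
      by_contra h
      push_neg at h
      exact hM.1 ((Subgroup.eq_top_iff' M).mpr h)
    exact ⟨QuotientGroup.mk x, 1, fun h => hx ((QuotientGroup.eq_one_iff x).mp h)⟩
  -- Cauchy: element of order p in Q
  have hdvd : p ∣ Nat.card Q := by
    obtain ⟨n, hn⟩ := IsPGroup.iff_card.mp hQ
    rcases Nat.eq_zero_or_pos n with rfl | hn' 
    · simp only [pow_zero] at hn
      exact absurd (Nat.card_eq_one_iff_unique.mp hn).1.allEq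
        (fun h => by obtain ⟨a, b, hab⟩ := hQnt; exact hab (h a b))
    · rw [hn]; exact dvd_pow_self p hn'.ne'
  haveI : Finite Q := Quotient.finite _
  haveI : Fintype Q := Fintype.ofFinite Q
  obtain ⟨g, hg⟩ := exists_prime_orderOf_dvd_card (G := Q) p (by rwa [← Nat.card_eq_fintype_card])
  have hgne : g ≠ 1 := by
    intro h; rw [h, orderOf_one] at hg; exact hp.one_lt.ne' hg.symm
  have hzp : Subgroup.zpowers g = ⊤ := by
    rcases htriv (Subgroup.zpowers g) with h | h
    · exact absurd ((Subgroup.zpowers_eq_bot).mp h) hgne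
    · exact h
  have : Nat.card Q = p := by
    rw [← hg, ← Nat.card_zpowers, hzp, Subgroup.card_top]
  rwa [Subgroup.index, ← hQdef]

/-- In a finite `p`-group, `x ^ p` lies in the Frattini subgroup. -/
lemma aux_pow_mem_frattini (hp : p.Prime) (hP : IsPGroup p P) (x : P) :
    x ^ p ∈ frattini P := by
  have : frattini P = ⨅ M ∈ {M : Subgroup P | IsCoatom M}, M := rfl
  rw [this]
  simp only [Subgroup.mem_iInf, Set.mem_setOf_eq]
  intro M hM
  haveI := aux_coatom_normal hp hP hM
  have := M.pow_index_mem x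
  rwa [aux_coatom_index hp hP hM] at this

end Aux

theorem frattini_ESPartition_of_pGroup {p : ℕ} (hp : p.Prime) {P : Type*} [Group P] [Finite P]
    (hP : IsPGroup p P) (hnc : ¬ IsCyclic P) :
    ∃ Part : Finset (Subgroup P), IsESPartition (frattini P) Part := by
  classical
  set π := QuotientGroup.mk' (frattini P) with hπ
  have hsurj : Function.Surjective π := QuotientGroup.mk'_surjective _
  set V := P ⧸ frattini P with hV
  -- every element of V has order dividing p
  have hexp : ∀ v : V, v ^ p = 1 := by
    intro v
    obtain ⟨x, rfl⟩ := hsurj v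
    rw [← map_pow, ← MonoidHom.mem_ker, QuotientGroup.ker_mk']
    exact aux_pow_mem_frattini hp hP x
  -- V is not cyclic
  have hVnc : ¬ IsCyclic V := by
    intro h
    obtain ⟨v, hv⟩ := h.exists_generator
    obtain ⟨x, rfl⟩ := hsurj v
    have htop : Subgroup.zpowers (π x) = ⊤ := by
      rw [Subgroup.eq_top_iff']; exact hv
    have : Subgroup.zpowers x ⊔ frattini P = ⊤ := by
      have := congrArg (Subgroup.comap π) htop
      rwa [← MonoidHom.map_zpowers, Subgroup.comap_map_eq, QuotientGroup.ker_mk',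
        Subgroup.comap_top] at this
    have := frattini_nongenerating this
    exact hnc (aux_isCyclic_of_zpowers_eq_top this)
  -- V is nontrivial
  have hVnt : Nontrivial V := by
    by_contra h
    haveI : Subsingleton V := not_nontrivial_iff_subsingleton.mp h
    exact hVnc (by infer_instance)
  -- orders of zpowers of nontrivial elements: p
  have hord : ∀ v : V, v ≠ 1 → orderOf v = p := by
    intro v hv
    have h1 : orderOf v ∣ p := orderOf_dvd_of_pow_eq_one (hexp v)
    rcases (Nat.dvd_prime hp).mp h1 with h | h
    · exact absurd (orderOf_eq_one_iff.mp h) hv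
    · exact h
  -- the partition
  haveI : Finite (Subgroup P) := by infer_instance
  set S : Set (Subgroup P) := {H | ∃ v : V, v ≠ 1 ∧ H = Subgroup.comap π (Subgroup.zpowers v)}
    with hS
  have hfin : S.Finite := Set.toFinite S
  refine ⟨hfin.toFinset, ?_, ?_⟩
  · refine ⟨?_, ?_, ?_, ?_⟩
    · -- card ≥ 2
      rw [Nat.succ_le_iff]
      rw [Finset.one_lt_card]
      obtain ⟨v, hv⟩ := exists_ne (1 : V)
      have hvtop : Subgroup.zpowers v ≠ ⊤ := by
        intro h
        exact hVnc (aux_isCyclic_of_zpowers_eq_top h)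
      obtain ⟨w, hw⟩ : ∃ w : V, w ∉ Subgroup.zpowers v := by
        by_contra h
        push_neg at h
        exact hvtop ((Subgroup.eq_top_iff' _).mpr h)
      have hwne : w ≠ 1 := fun h => hw (h ▸ Subgroup.one_mem _)
      refine ⟨Subgroup.comap π (Subgroup.zpowers v), ?_,
        Subgroup.comap π (Subgroup.zpowers w), ?_, ?_⟩
      · rw [Set.Finite.mem_toFinset]; exact ⟨v, hv, rfl⟩
      · rw [Set.Finite.mem_toFinset]; exact ⟨w, hwne, rfl⟩
      · intro h
        have := Subgroup.comap_injective hsurj h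
        exact hw (this ▸ Subgroup.mem_zpowers w)
    · -- proper
      intro H hH
      rw [Set.Finite.mem_toFinset] at hH
      obtain ⟨v, hv, rfl⟩ := hH
      intro h
      have : Subgroup.zpowers v = ⊤ := by
        apply Subgroup.comap_injective hsurj
        rw [h, Subgroup.comap_top]
      exact hVnc (aux_isCyclic_of_zpowers_eq_top this)
    · -- cover
      intro g
      by_cases hg : π g = 1
      · obtain ⟨v, hv⟩ := exists_ne (1 : V)
        exact ⟨Subgroup.comap π (Subgroup.zpowers v), Set.Finite.mem_toFinset _ |>.mpr
          ⟨v, hv, rfl⟩, by rw [Subgroup.mem_comap, hg]; exact Subgroup.one_mem _⟩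
      · exact ⟨Subgroup.comap π (Subgroup.zpowers (π g)), Set.Finite.mem_toFinset _ |>.mpr
          ⟨π g, hg, rfl⟩, by simp [Subgroup.mem_comap, Subgroup.mem_zpowers]⟩
    · -- intersections
      intro H hH K hK hne
      rw [Set.Finite.mem_toFinset] at hH hK
      obtain ⟨v, hv, rfl⟩ := hH
      obtain ⟨w, hw, rfl⟩ := hK
      have hzne : Subgroup.zpowers v ≠ Subgroup.zpowers w := fun h => hne (by rw [h])
      have hbot : Subgroup.zpowers v ⊓ Subgroup.zpowers w = ⊥ := by
        by_contra h
        -- the inf is a subgroup of a group of order p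
        have hle : Subgroup.zpowers v ⊓ Subgroup.zpowers w ≤ Subgroup.zpowers v := inf_le_left
        have hcardv : Nat.card (Subgroup.zpowers v) = p := by
          rw [Nat.card_zpowers, hord v hv]
        have hcardw : Nat.card (Subgroup.zpowers w) = p := by
          rw [Nat.card_zpowers, hord w hw]
        have hdvd : Nat.card (Subgroup.zpowers v ⊓ Subgroup.zpowers w : Subgroup V) ∣ p := by
          rw [← hcardv]
          exact Subgroup.card_dvd_of_le hle
        rcases (Nat.dvd_prime hp).mp hdvd with h1 | h1
        · exact h (Subgroup.eq_bot_of_card_eq _ h1)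
        · have hv' : Subgroup.zpowers v ⊓ Subgroup.zpowers w = Subgroup.zpowers v :=
            Subgroup.eq_of_le_of_card_ge hle (by rw [hcardv, h1])
          have hw' : Subgroup.zpowers v ⊓ Subgroup.zpowers w = Subgroup.zpowers w :=
            Subgroup.eq_of_le_of_card_ge inf_le_right (by rw [hcardw, h1])
          exact hzne (hv'.symm.trans hw')
      rw [← Subgroup.comap_inf, hbot, MonoidHom.comap_bot, QuotientGroup.ker_mk']
  · -- equal cardinalities
    intro H hH K hK
    rw [Set.Finite.mem_toFinset] at hH hK
    obtain ⟨v, hv, rfl⟩ := hH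
    obtain ⟨w, hw, rfl⟩ := hK
    have hidx : ∀ u : V, u ≠ 1 →
        (Subgroup.comap π (Subgroup.zpowers u)).index = Nat.card V / p := by
      intro u hu
      rw [Subgroup.index_comap_of_surjective _ hsurj]
      have h1 : Nat.card (Subgroup.zpowers u) * (Subgroup.zpowers u).index = Nat.card V :=
        Subgroup.card_mul_index _
      rw [Nat.card_zpowers, hord u hu] at h1
      rw [← h1, Nat.mul_div_cancel_left _ hp.pos]
    have h1 : Nat.card (Subgroup.comap π (Subgroup.zpowers v)) *
        (Subgroup.comap π (Subgroup.zpowers v)).index = Nat.card P :=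
      Subgroup.card_mul_index _
    have h2 : Nat.card (Subgroup.comap π (Subgroup.zpowers w)) *
        (Subgroup.comap π (Subgroup.zpowers w)).index = Nat.card P :=
      Subgroup.card_mul_index _
    rw [hidx v hv] at h1
    rw [hidx w hw] at h2
    have hpos : 0 < Nat.card V / p := by
      have := hidx v hv
      have hne : (Subgroup.comap π (Subgroup.zpowers v)).index ≠ 0 :=
        Subgroup.index_ne_zero_of_finite
      omega
    exact Nat.eq_of_mul_eq_mul_right hpos (h1.trans h2.symm)
end

section
/- Let n ≥ 4 be an even integer and let G = D_{2n} be the dihedral group of order 2n. Then G has a strict Z(G)-partition, i.e. a strict S-partition with S equal to the center of G (given by the subgroup ⟨x⟩ together with the centralizers of the reflections; these components need not have equal orders). -/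
/-!
The rotations `⟨r 1⟩` meet the centralizer of any reflection `sr i` exactly in the rotations
`r j` with `2 j = 0`, and these are the central elements as soon as `2 ≠ 0` in `ZMod n`.
The centralizer of `sr i` contains exactly the reflections `sr k` with `2 (k - i) = 0`, so two
centralizers of reflections sharing a reflection coincide; hence distinct ones meet inside the
rotations, and thus in the centre.
-/

open Subgroup

theorem isStrictPartition_insert {G : Type*} [Group G] [DecidableEq (Subgroup G)]
    {S A : Subgroup G} {P : Finset (Subgroup G)}
    (hA : A ≠ ⊤) (hP : ∀ H ∈ P, H ≠ ⊤) (hPA : ∃ H ∈ P, H ≠ A)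
    (hcover : ∀ g : G, g ∈ A ∨ ∃ H ∈ P, g ∈ H) (hinf : ∀ H ∈ P, A ⊓ H = S)
    (hpair : ∀ H ∈ P, ∀ K ∈ P, H ≠ K → H ⊓ K ≤ A) :
    IsStrictPartition S (insert A P) := by
  have hS : ∀ H ∈ P, S ≤ H := fun H hH => hinf H hH ▸ inf_le_right
  refine ⟨?_, ?_, ?_, ?_⟩
  · obtain ⟨H, hH, hHA⟩ := hPA
    exact Finset.one_lt_card.2
      ⟨A, Finset.mem_insert_self _ _, H, Finset.mem_insert_of_mem hH, hHA.symm⟩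
  · simpa [hA] using hP
  · intro g
    rcases hcover g with hg | ⟨H, hH, hg⟩
    · exact ⟨A, Finset.mem_insert_self _ _, hg⟩
    · exact ⟨H, Finset.mem_insert_of_mem hH, hg⟩
  · intro H hH K hK hHK
    rcases Finset.mem_insert.1 hH with rfl | hHP <;> rcases Finset.mem_insert.1 hK with rfl | hKP
    · exact absurd rfl hHK
    · exact hinf K hKP
    · rw [inf_comm]; exact hinf H hHP
    · refine le_antisymm ?_ (le_inf (hS H hHP) (hS K hKP))
      rw [← hinf H hHP]
      exact le_inf (hpair H hHP K hKP hHK) inf_le_left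

namespace DihedralGroup

variable {n : ℕ}

theorem r_mem_zpowers_r_one (i : ZMod n) : r i ∈ zpowers (r 1 : DihedralGroup n) :=
  ⟨(i.cast : ℤ), by simp only [r_one_zpow, ZMod.intCast_zmod_cast]⟩

theorem sr_notMem_zpowers_r_one (i : ZMod n) : sr i ∉ zpowers (r 1 : DihedralGroup n) := by
  rintro ⟨k, hk⟩
  simp only [r_one_zpow] at hk
  cases hk

theorem r_mem_centralizer_sr_iff (i j : ZMod n) :
    r j ∈ centralizer {sr i} ↔ 2 * j = 0 := by
  rw [mem_centralizer_singleton_iff, r_mul_sr, sr_mul_r, sr.injEq]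
  constructor <;> intro h <;> linear_combination -h

theorem sr_mem_centralizer_sr_iff (i j : ZMod n) :
    sr j ∈ centralizer {sr i} ↔ 2 * (j - i) = 0 := by
  rw [mem_centralizer_singleton_iff, sr_mul_sr, sr_mul_sr, r.injEq]
  constructor <;> intro h <;> linear_combination -h

theorem centralizer_sr_ne_top (h2 : (2 : ZMod n) ≠ 0) (i : ZMod n) :
    centralizer {sr i} ≠ ⊤ := fun h => by
  have := (r_mem_centralizer_sr_iff i 1).1 (h ▸ mem_top (r 1))
  exact h2 (by simpa using this)

theorem centralizer_sr_eq_of_sr_mem {i j : ZMod n} (h : sr j ∈ centralizer {sr i}) :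
    centralizer {sr j} = centralizer {sr i} := by
  rw [sr_mem_centralizer_sr_iff] at h
  ext (k | k)
  · simp only [r_mem_centralizer_sr_iff]
  · simp only [sr_mem_centralizer_sr_iff]
    constructor <;> intro hk
    · linear_combination hk + h
    · linear_combination hk - h

theorem centralizer_sr_inf_le_zpowers {i j : ZMod n}
    (hij : centralizer {sr i} ≠ centralizer {sr j}) :
    centralizer {sr i} ⊓ centralizer {sr j} ≤ zpowers (r 1) := by
  rintro (k | k) ⟨hi, hj⟩
  · exact r_mem_zpowers_r_one k
  · exact absurd ((centralizer_sr_eq_of_sr_mem hi).symm.trans (centralizer_sr_eq_of_sr_mem hj)) hij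

theorem sr_notMem_center (h2 : (2 : ZMod n) ≠ 0) (i : ZMod n) :
    sr i ∉ center (DihedralGroup n) := fun h => by
  have := mem_center_iff.1 h (r 1)
  rw [r_mul_sr, sr_mul_r, sr.injEq] at this
  exact h2 (by linear_combination -this)

theorem r_mem_center_iff (j : ZMod n) : r j ∈ center (DihedralGroup n) ↔ 2 * j = 0 := by
  refine ⟨fun h => (r_mem_centralizer_sr_iff 0 j).1 (center_le_centralizer _ h), fun h => ?_⟩
  refine mem_center_iff.2 fun
    | r k => by simp only [r_mul_r, add_comm]
    | sr k => by rw [r_mul_sr, sr_mul_r, sr.injEq]; linear_combination h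

theorem center_eq_zpowers_inf_centralizer_sr (h2 : (2 : ZMod n) ≠ 0) (i : ZMod n) :
    center (DihedralGroup n) = zpowers (r 1) ⊓ centralizer {sr i} := by
  ext (j | j)
  · simp [r_mem_center_iff, r_mem_zpowers_r_one, r_mem_centralizer_sr_iff]
  · simp [sr_notMem_center h2, sr_notMem_zpowers_r_one]

end DihedralGroup

open DihedralGroup in
theorem dihedral_strict_center_partition_general (n : ℕ) (hn : 4 ≤ n) :
    ∃ P : Finset (Subgroup (DihedralGroup n)),
      IsStrictPartition (Subgroup.center (DihedralGroup n)) P := by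
  classical
  have : NeZero n := ⟨by omega⟩
  have h2 : (2 : ZMod n) ≠ 0 := fun h => by
    have := Nat.le_of_dvd two_pos <| (ZMod.natCast_eq_zero_iff 2 n).1 (by exact_mod_cast h)
    omega
  refine ⟨insert (zpowers (r 1)) (Finset.univ.image fun i => centralizer {sr i}),
    isStrictPartition_insert ?_ ?_ ?_ ?_ ?_ ?_⟩
  · exact fun h => sr_notMem_zpowers_r_one 0 (h ▸ mem_top _)
  · simpa using centralizer_sr_ne_top h2
  · exact ⟨_, Finset.mem_image_of_mem _ (Finset.mem_univ 0), fun h =>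
      sr_notMem_zpowers_r_one 0 (h ▸ mem_centralizer_singleton_iff.2 rfl)⟩
  · rintro (j | j)
    · exact .inl (r_mem_zpowers_r_one j)
    · exact .inr ⟨_, Finset.mem_image_of_mem _ (Finset.mem_univ j),
        mem_centralizer_singleton_iff.2 rfl⟩
  · simpa using fun i => (center_eq_zpowers_inf_centralizer_sr h2 i).symm
  · simpa using fun i j => centralizer_sr_inf_le_zpowers (i := i) (j := j)

theorem dihedral_strict_center_partition (n : ℕ) (hn : 4 ≤ n) (heven : Even n) :
    ∃ P : Finset (Subgroup (DihedralGroup n)),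
      IsStrictPartition (Subgroup.center (DihedralGroup n)) P :=
  dihedral_strict_center_partition_general n hn
end

section
/- Let Q_8 be the quaternion group of order 8. Then Q_8 has an E(Z(Q_8))-partition (its three cyclic subgroups of order 4), and moreover every ES-partition of Q_8 satisfies S = Z(Q_8); in particular Q_8 has no ES-partition with S trivial. -/
namespace QuatAux

open QuaternionGroup

abbrev Q := QuaternionGroup 2

def F1 : Finset Q := {a 0, a 1, a 2, a 3}
def F2 : Finset Q := {a 0, xa 0, a 2, xa 2}
def F3 : Finset Q := {a 0, xa 1, a 2, xa 3}

def C1 : Subgroup Q where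
  carrier := ↑F1
  one_mem' := by decide
  mul_mem' := by
    intro x y hx hy
    revert hx hy; change x ∈ F1 → y ∈ F1 → x * y ∈ F1; revert x y; decide
  inv_mem' := by
    intro x hx; revert hx; change x ∈ F1 → x⁻¹ ∈ F1; revert x; decide

def C2 : Subgroup Q where
  carrier := ↑F2
  one_mem' := by decide
  mul_mem' := by
    intro x y hx hy
    revert hx hy; change x ∈ F2 → y ∈ F2 → x * y ∈ F2; revert x y; decide
  inv_mem' := by
    intro x hx; revert hx; change x ∈ F2 → x⁻¹ ∈ F2; revert x; decide

def C3 : Subgroup Q where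
  carrier := ↑F3
  one_mem' := by decide
  mul_mem' := by
    intro x y hx hy
    revert hx hy; change x ∈ F3 → y ∈ F3 → x * y ∈ F3; revert x y; decide
  inv_mem' := by
    intro x hx; revert hx; change x ∈ F3 → x⁻¹ ∈ F3; revert x; decide

lemma mem_C1 (x : Q) : x ∈ C1 ↔ x ∈ F1 := Iff.rfl
lemma mem_C2 (x : Q) : x ∈ C2 ↔ x ∈ F2 := Iff.rfl
lemma mem_C3 (x : Q) : x ∈ C3 ↔ x ∈ F3 := Iff.rfl

lemma mem_center_iff' (x : Q) : x ∈ Subgroup.center Q ↔ (x = 1 ∨ x = a 2) := by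
  have h : ∀ x : Q, (∀ g : Q, g * x = x * g) ↔ (x = 1 ∨ x = a 2) := by decide
  rw [Subgroup.mem_center_iff]
  exact h x

lemma card_C1 : Nat.card C1 = 4 := by
  have : Nat.card C1 = (F1 : Set Q).ncard := Nat.card_coe_set_eq _ ▸ rfl
  rw [this, Set.ncard_coe_finset]; decide

lemma card_C2 : Nat.card C2 = 4 := by
  have : Nat.card C2 = (F2 : Set Q).ncard := Nat.card_coe_set_eq _ ▸ rfl
  rw [this, Set.ncard_coe_finset]; decide

lemma card_C3 : Nat.card C3 = 4 := by
  have : Nat.card C3 = (F3 : Set Q).ncard := Nat.card_coe_set_eq _ ▸ rfl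
  rw [this, Set.ncard_coe_finset]; decide

lemma gen_lemma : ∀ x y g : Q, (x ≠ 1 ∧ x ≠ a 2) →
    (y ≠ 1 ∧ y ≠ x ∧ y ≠ x * x ∧ y ≠ x * x * x) →
    ∃ n ∈ Finset.range 4, ∃ m ∈ Finset.range 2, x ^ n * y ^ m = g := by decide

/-- A subgroup containing a non-central element `x` and an element `y` outside `⟨x⟩`
is the whole group. -/
lemma eq_top_of_two_gen (H : Subgroup Q) (x y : Q) (hx : x ∈ H) (hy : y ∈ H)
    (hx' : x ≠ 1 ∧ x ≠ a 2) (hy' : y ≠ 1 ∧ y ≠ x ∧ y ≠ x * x ∧ y ≠ x * x * x) :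
    H = ⊤ := by
  rw [Subgroup.eq_top_iff']
  intro g
  obtain ⟨n, -, m, -, h⟩ := gen_lemma x y g hx' hy'
  exact h ▸ mul_mem (pow_mem hx n) (pow_mem hy m)

end QuatAux

open QuaternionGroup QuatAux in
theorem quaternion_ESPartition_center :
    (∃ P : Finset (Subgroup (QuaternionGroup 2)),
      IsESPartition (Subgroup.center (QuaternionGroup 2)) P) ∧
    (∀ (S : Subgroup (QuaternionGroup 2)) (P : Finset (Subgroup (QuaternionGroup 2))),
      IsESPartition S P → S = Subgroup.center (QuaternionGroup 2)) := by
  classical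
  constructor
  · -- existence of the partition {C1, C2, C3}
    refine ⟨{C1, C2, C3}, ⟨⟨?_, ?_, ?_, ?_⟩, ?_⟩⟩
    · -- 2 ≤ card
      refine Finset.one_lt_card.mpr ⟨C1, by simp, C2, by simp, ?_⟩
      intro h
      have : a 1 ∈ C2 := h ▸ ((mem_C1 (a 1)).mpr (by decide))
      exact absurd ((mem_C2 (a 1)).mp this) (by decide)
    · -- properness
      intro H hH
      have hmem : H = C1 ∨ H = C2 ∨ H = C3 := by simpa using hH
      rcases hmem with rfl | rfl | rfl
      · intro h
        exact absurd ((mem_C1 (xa 0)).mp (h ▸ Subgroup.mem_top _)) (by decide)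
      · intro h
        exact absurd ((mem_C2 (a 1)).mp (h ▸ Subgroup.mem_top _)) (by decide)
      · intro h
        exact absurd ((mem_C3 (a 1)).mp (h ▸ Subgroup.mem_top _)) (by decide)
    · -- covering
      intro g
      have h : g ∈ F1 ∨ g ∈ F2 ∨ g ∈ F3 := by revert g; decide
      rcases h with h | h | h
      · exact ⟨C1, by simp, (mem_C1 g).mpr h⟩
      · exact ⟨C2, by simp, (mem_C2 g).mpr h⟩
      · exact ⟨C3, by simp, (mem_C3 g).mpr h⟩
    · -- pairwise intersections
      have i12 : C1 ⊓ C2 = Subgroup.center Q := by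
        ext x
        rw [Subgroup.mem_inf, mem_C1, mem_C2, mem_center_iff']
        revert x; decide
      have i13 : C1 ⊓ C3 = Subgroup.center Q := by
        ext x
        rw [Subgroup.mem_inf, mem_C1, mem_C3, mem_center_iff']
        revert x; decide
      have i23 : C2 ⊓ C3 = Subgroup.center Q := by
        ext x
        rw [Subgroup.mem_inf, mem_C2, mem_C3, mem_center_iff']
        revert x; decide
      intro H hH K hK hne
      have hmemH : H = C1 ∨ H = C2 ∨ H = C3 := by simpa using hH
      have hmemK : K = C1 ∨ K = C2 ∨ K = C3 := by simpa using hK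
      rcases hmemH with rfl | rfl | rfl <;> rcases hmemK with rfl | rfl | rfl <;>
        first
          | exact absurd rfl hne
          | assumption
          | (rw [inf_comm]; assumption)
    · -- equal cardinalities
      intro H hH K hK
      have hmemH : H = C1 ∨ H = C2 ∨ H = C3 := by simpa using hH
      have hmemK : K = C1 ∨ K = C2 ∨ K = C3 := by simpa using hK
      rcases hmemH with rfl | rfl | rfl <;> rcases hmemK with rfl | rfl | rfl <;>
        simp only [card_C1, card_C2, card_C3]
  · -- uniqueness of S
    rintro S P ⟨⟨hcard, hprop, hcover, hinter⟩, -⟩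
    -- Step 1 : the central involution a 2 belongs to S
    obtain ⟨H1, hH1, ha1⟩ := hcover (a 1)
    obtain ⟨K1, hK1, hxa0⟩ := hcover (xa 0)
    have hne1 : H1 ≠ K1 := by
      rintro rfl
      exact hprop H1 hH1 (eq_top_of_two_gen H1 (a 1) (xa 0) ha1 hxa0 (by decide) (by decide))
    have ha2S : a 2 ∈ S := by
      rw [← hinter H1 hH1 K1 hK1 hne1, Subgroup.mem_inf]
      constructor
      · have : (a 2 : Q) = a 1 * a 1 := by decide
        exact this ▸ mul_mem ha1 ha1
      · have : (a 2 : Q) = xa 0 * xa 0 := by decide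
        exact this ▸ mul_mem hxa0 hxa0
    -- Step 2 : S ≤ center
    obtain ⟨H, hH, K, hK, hne⟩ := Finset.one_lt_card.mp hcard
    have hSle : S ≤ Subgroup.center Q := by
      intro s hs
      rw [mem_center_iff']
      by_contra hc
      push_neg at hc
      obtain ⟨hs1, hs2⟩ := hc
      have hsH : s ∈ H := (hinter H hH K hK hne ▸ hs : s ∈ H ⊓ K).1
      have hsK : s ∈ K := (hinter H hH K hK hne ▸ hs : s ∈ H ⊓ K).2
      -- every element of H is a power of s
      have hsub : ∀ L : Subgroup Q, L ∈ P → s ∈ L →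
          ∀ y ∈ L, y = 1 ∨ y = s ∨ y = s * s ∨ y = s * s * s := by
        intro L hL hsL y hyL
        by_contra hy
        push_neg at hy
        exact hprop L hL (eq_top_of_two_gen L s y hsL hyL ⟨hs1, hs2⟩
          ⟨hy.1, hy.2.1, hy.2.2.1, hy.2.2.2⟩)
      apply hne
      apply le_antisymm
      · intro y hy
        rcases hsub H hH hsH y hy with rfl | rfl | rfl | rfl
        · exact one_mem K
        · exact hsK
        · exact mul_mem hsK hsK
        · exact mul_mem (mul_mem hsK hsK) hsK
      · intro y hy
        rcases hsub K hK hsK y hy with rfl | rfl | rfl | rfl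
        · exact one_mem H
        · exact hsH
        · exact mul_mem hsH hsH
        · exact mul_mem (mul_mem hsH hsH) hsH
    -- Step 3 : center ≤ S
    have hleS : Subgroup.center Q ≤ S := by
      intro z hz
      rcases (mem_center_iff' z).mp hz with rfl | rfl
      · exact one_mem S
      · exact ha2S
    exact le_antisymm hSle hleS
end

section
/- Let G be a finite non-cyclic group of odd order, and suppose there exists a nontrivial subgroup F of G such that every proper non-cyclic subgroup of G has an EF-partition. Then G is a minimal non-cyclic group, i.e. every proper subgroup of G is cyclic. -/
/-!
A smallest proper non-cyclic subgroup `H` is minimal non-cyclic, has odd order and carries an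
ES-partition whose kernel `S` is nontrivial; we show that no such group exists. Every element lies
in a cyclic component of order `k < |H|`, so `exp H < |H|`, which forces `H` to be a `p`-group.
The components are then maximal, hence normal of index `p`, so all `p`-th powers and commutators
lie in their intersection `S`, which is central since the abelian components cover `H`. For odd
`p` the `p`-th power map is therefore a homomorphism with image in `S` and with a proper, hence
cyclic, kernel of exponent `p`, so `|H| ≤ p |S| < p k = |H|`.
-/

open Subgroup
open scoped commutatorElement

section

variable {G : Type*} [Group G]

theorem Subgroup.card_lt_card_of_lt [Finite G] {H K : Subgroup G} (h : H < K) :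
    Nat.card H < Nat.card K :=
  (card_le_of_le h.le).lt_of_ne fun hc => h.ne (eq_of_le_of_card_ge h.le hc.ge)

theorem card_le_of_isCyclic_of_forall_pow_eq_one [IsCyclic G] {n : ℕ} (hn : n ≠ 0)
    (h : ∀ g : G, g ^ n = 1) : Nat.card G ≤ n :=
  IsCyclic.exponent_eq_card (α := G) ▸
    Nat.le_of_dvd (Nat.pos_of_ne_zero hn) (Monoid.exponent_dvd_of_forall_pow_eq_one h)

theorem card_dvd_exponent_of_forall_sylow_isCyclic [Finite G]
    (h : ∀ (p : ℕ) [Fact p.Prime] (P : Sylow p G), IsCyclic P) :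
    Nat.card G ∣ Monoid.exponent G := by
  refine (Nat.factorization_prime_le_iff_dvd Nat.card_pos.ne'
    Monoid.exponent_ne_zero_of_finite).mp fun p hp => ?_
  have : Fact p.Prime := ⟨hp⟩
  obtain ⟨P⟩ := (inferInstance : Nonempty (Sylow p G))
  have : IsCyclic P := h p P
  rw [← hp.pow_dvd_iff_le_factorization Monoid.exponent_ne_zero_of_finite,
    ← P.card_eq_multiplicity, ← IsCyclic.exponent_eq_card]
  exact Monoid.exponent_dvd_of_monoidHom _ (P : Subgroup G).subtype_injective

theorem exists_isPGroup_of_exponent_lt_card [Finite G]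
    (hpc : ∀ H : Subgroup G, H ≠ ⊤ → IsCyclic H) (h : Monoid.exponent G < Nat.card G) :
    ∃ p, p.Prime ∧ IsPGroup p G := by
  by_contra! hno
  refine h.not_ge (Nat.le_of_dvd (Nat.pos_of_ne_zero Monoid.exponent_ne_zero_of_finite) ?_)
  refine card_dvd_exponent_of_forall_sylow_isCyclic fun p hp P => hpc P fun htop => ?_
  exact hno p hp.out ((htop ▸ P.isPGroup').of_equiv topEquiv)

namespace IsPGroup

variable {p : ℕ} [Fact p.Prime] [Finite G]

theorem normal_of_isCoatom (hG : IsPGroup p G) {K : Subgroup G} (hK : IsCoatom K) : K.Normal :=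
  have := hG.isNilpotent
  NormalizerCondition.normal_of_coatom K Group.normalizerCondition_of_isNilpotent hK

theorem index_eq_of_isCoatom (hG : IsPGroup p G) {K : Subgroup G} (hK : IsCoatom K) :
    K.index = p := by
  have := hG.normal_of_isCoatom hK
  have : IsSimpleOrder (Subgroup (G ⧸ K)) := (OrderIso.isSimpleOrder_iff (β := Set.Ici K)
      (QuotientGroup.comapMk'OrderIso K)).mpr (Set.isSimpleOrder_Ici_iff_isCoatom.mpr hK)
  have hpdvd : p ∣ Nat.card (G ⧸ K) := by
    refine ((hG.to_quotient K).card_eq_or_dvd).resolve_left fun h1 => hK.1 ?_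
    rwa [← index_eq_card, index_eq_one] at h1
  obtain ⟨w, hw⟩ := exists_prime_orderOf_dvd_card' p hpdvd
  have hw1 : w ≠ 1 := fun h => by simp [h, (Fact.out : p.Prime).ne_one.symm] at hw
  rw [index_eq_card, ← card_top, ← (eq_bot_or_eq_top (zpowers w)).resolve_left
    (zpowers_ne_bot.mpr hw1), Nat.card_zpowers, hw]

end IsPGroup

theorem commutator_mem_of_index_prime {K : Subgroup G} [K.Normal] (hK : K.index.Prime)
    (a b : G) : ⁅a, b⁆ ∈ K := by
  have : Fact (Nat.card (G ⧸ K)).Prime := ⟨index_eq_card K ▸ hK⟩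
  have : IsCyclic (G ⧸ K) := isCyclic_of_prime_card rfl
  rw [← QuotientGroup.eq_one_iff, ← QuotientGroup.mk'_apply, map_commutatorElement,
    commutatorElement_eq_one_iff_mul_comm]
  exact IsMulCommutative.is_comm.comm _ _

section CentralCommutator

variable {x y c : G} (hc : c ∈ center G) (h : y * x = c * x * y)
include hc h

theorem pow_mul_eq_of_mul_eq_mul_mul (n : ℕ) : y ^ n * x = c ^ n * x * y ^ n := by
  induction n with
  | zero => simp
  | succ n ih =>
    calc y ^ (n + 1) * x = y * (y ^ n * x) := by rw [pow_succ', mul_assoc]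
    _ = y * c ^ n * x * y ^ n := by rw [ih]; simp only [mul_assoc]
    _ = c ^ n * (y * x) * y ^ n := by
      rw [mem_center_iff.mp (pow_mem hc n) y]; simp only [mul_assoc]
    _ = c ^ (n + 1) * x * y ^ (n + 1) := by rw [h, pow_succ, pow_succ']; simp only [mul_assoc]

theorem mul_pow_eq_of_mul_eq_mul_mul (n : ℕ) :
    (x * y) ^ n = x ^ n * y ^ n * c ^ n.choose 2 := by
  have hcomm (m : ℕ) (g : G) : c ^ m * g = g * c ^ m := (mem_center_iff.mp (pow_mem hc m) g).symm
  induction n with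
  | zero => simp
  | succ n ih =>
    calc (x * y) ^ (n + 1) = x ^ n * (y ^ n * x) * y * c ^ n.choose 2 := by
          rw [pow_succ, ih, mul_assoc _ (c ^ _), hcomm]; simp only [mul_assoc]
    _ = x ^ n * x * y ^ n * y * (c ^ n * c ^ n.choose 2) := by
          rw [pow_mul_eq_of_mul_eq_mul_mul hc h, mul_assoc (c ^ n), hcomm n]
          simp only [mul_assoc, hcomm n]
    _ = x ^ (n + 1) * y ^ (n + 1) * c ^ (n + 1).choose 2 := by
          rw [pow_succ x n, pow_succ y n, Nat.choose_succ_succ', Nat.choose_one_right, pow_add,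
            ← mul_assoc _ (y ^ n)]

end CentralCommutator

theorem mul_pow_of_odd_of_commutator_mem_center {n : ℕ} (hn : Odd n)
    (hcomm : ∀ x y : G, ⁅x, y⁆ ∈ center G) (hpow : ∀ x : G, x ^ n ∈ center G) (x y : G) :
    (x * y) ^ n = x ^ n * y ^ n := by
  have h : y * x = ⁅y, x⁆ * x * y := by rw [commutatorElement_def]; group
  have hc : ⁅y, x⁆ ^ n = 1 := by
    have := pow_mul_eq_of_mul_eq_mul_mul (hcomm y x) h n
    rw [← mem_center_iff.mp (hpow y) x, mul_assoc] at this
    exact mul_eq_right.mp this.symm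
  obtain ⟨m, rfl⟩ := hn
  rw [mul_pow_eq_of_mul_eq_mul_mul (hcomm y x) h, Nat.choose_two_right, Nat.add_sub_cancel,
    mul_comm 2 m, ← mul_assoc, Nat.mul_div_cancel _ two_pos, mul_comm, pow_mul, hc, one_pow, mul_one]

namespace IsStrictPartition

variable {S : Subgroup G} {P : Finset (Subgroup G)} (hP : IsStrictPartition S P)
include hP

theorem le_of_mem_s17 {K : Subgroup G} (hK : K ∈ P) : S ≤ K := by
  obtain ⟨K', hK', hne⟩ := Finset.exists_mem_ne hP.1 K
  exact hP.2.2.2 K hK K' hK' hne.symm ▸ inf_le_left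

theorem mem_of_forall_mem {g : G} (h : ∀ K ∈ P, g ∈ K) : g ∈ S := by
  obtain ⟨K₀, hK₀, K₁, hK₁, hne⟩ := Finset.one_lt_card.mp hP.1
  exact hP.2.2.2 K₀ hK₀ K₁ hK₁ hne ▸ ⟨h K₀ hK₀, h K₁ hK₁⟩

theorem le_center (hcyc : ∀ K ∈ P, IsCyclic K) : S ≤ center G := fun z hz =>
  mem_center_iff.mpr fun g => by
    obtain ⟨K, hK, hg⟩ := hP.2.2.1 g
    have := hcyc K hK
    exact setLike_mul_comm hg (hP.le_of_mem_s17 hK hz)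

end IsStrictPartition

namespace IsESPartition

variable {S K : Subgroup G} {P : Finset (Subgroup G)} (hP : IsESPartition S P)
include hP

theorem pow_card_eq_one (hK : K ∈ P) (g : G) : g ^ Nat.card K = 1 := by
  obtain ⟨K', hK', hg⟩ := hP.1.2.2.1 g
  rw [hP.2 K hK K' hK']
  exact orderOf_dvd_iff_pow_eq_one.mp (K'.orderOf_dvd_natCard hg)

variable [Finite G]

theorem lt_of_mem (hK : K ∈ P) : S < K := by
  refine (hP.1.le_of_mem_s17 hK).lt_of_ne fun hSK => ?_
  obtain ⟨K', hK', hne⟩ := Finset.exists_mem_ne hP.1.1 K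
  refine hne (Eq.trans ?_ hSK)
  exact (eq_of_le_of_card_ge (hP.1.le_of_mem_s17 hK') (hSK ▸ (hP.2 K' hK' K hK).le)).symm

variable (hpc : ∀ H : Subgroup G, H ≠ ⊤ → IsCyclic H)
include hpc

theorem isCoatom_of_mem (hK : K ∈ P) : IsCoatom K := by
  refine ⟨hP.1.2.1 K hK, fun B hKB => by_contra fun hB => ?_⟩
  obtain ⟨g, rfl⟩ := B.isCyclic_iff_exists_zpowers_eq_top.mp (hpc B hB)
  obtain ⟨K', hK', hg⟩ := hP.1.2.2.1 g
  have hlt : K < K' := hKB.trans_le (zpowers_le.mpr hg)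
  exact hlt.ne (eq_of_le_of_card_ge hlt.le (hP.2 K' hK' K hK).le)

theorem exists_isPGroup : ∃ p, p.Prime ∧ IsPGroup p G := by
  obtain ⟨K, hK⟩ := Finset.card_pos.mp (two_pos.trans_le hP.1.1)
  refine exists_isPGroup_of_exponent_lt_card hpc ?_
  calc Monoid.exponent G ≤ Nat.card K :=
        Nat.le_of_dvd Nat.card_pos (Monoid.exponent_dvd_of_forall_pow_eq_one (hP.pow_card_eq_one hK))
    _ < Nat.card G := (card_lt_card_of_lt (hP.1.2.1 K hK).lt_top).trans_eq card_top

section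

variable {p : ℕ} [hp : Fact p.Prime] (hG : IsPGroup p G)
include hG

theorem pow_mem (x : G) : x ^ p ∈ S :=
  hP.1.mem_of_forall_mem fun K hK => by
    have hK := hP.isCoatom_of_mem hpc hK
    have := hG.normal_of_isCoatom hK
    exact hG.index_eq_of_isCoatom hK ▸ K.pow_index_mem x

theorem commutator_mem (x y : G) : ⁅x, y⁆ ∈ S :=
  hP.1.mem_of_forall_mem fun K hK => by
    have hK := hP.isCoatom_of_mem hpc hK
    have := hG.normal_of_isCoatom hK
    exact commutator_mem_of_index_prime (hG.index_eq_of_isCoatom hK ▸ Fact.out) x y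

theorem eq_bot_of_isPGroup (hodd : Odd (Nat.card G)) : S = ⊥ := by
  by_contra hS
  obtain ⟨K, hK⟩ := Finset.card_pos.mp (two_pos.trans_le hP.1.1)
  have hSK := card_lt_card_of_lt (hP.lt_of_mem hK)
  have hcardG : Nat.card G = Nat.card K * p := by
    rw [← card_mul_index K, hG.index_eq_of_isCoatom (hP.isCoatom_of_mem hpc hK)]
  have hpS : p ∣ Nat.card S :=
    ((hG.to_subgroup S).card_eq_or_dvd).resolve_left (mt (eq_bot_of_card_eq S) hS)
  have hpodd : Odd p := hodd.of_dvd_nat (hpS.trans S.card_subgroup_dvd_card)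
  have hcen := hP.1.le_center fun K hK => hpc K (hP.1.2.1 K hK)
  let φ : G →* G := MonoidHom.mk' (· ^ p) <| mul_pow_of_odd_of_commutator_mem_center hpodd
    (fun x y => hcen (hP.commutator_mem hpc hG x y)) (fun x => hcen (hP.pow_mem hpc hG x))
  have hrange : Nat.card φ.range ≤ Nat.card S :=
    card_le_of_le (by rintro _ ⟨x, rfl⟩; exact hP.pow_mem hpc hG x)
  have hker : Nat.card φ.ker ≤ p := by
    have hker_ne_top : φ.ker ≠ ⊤ := fun htop => by
      have : IsCyclic K := hpc K (hP.1.2.1 K hK)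
      have := card_le_of_isCyclic_of_forall_pow_eq_one hp.out.ne_zero fun g : K =>
        Subtype.ext (MonoidHom.mem_ker.mp (htop ▸ mem_top (g : G)))
      have := Nat.le_of_dvd Nat.card_pos hpS
      omega
    have := hpc _ hker_ne_top
    exact card_le_of_isCyclic_of_forall_pow_eq_one hp.out.ne_zero fun g => Subtype.ext g.2
  have hcount : Nat.card G = Nat.card φ.ker * Nat.card φ.range := by
    rw [← index_ker, card_mul_index]
  have : Nat.card K * p ≤ Nat.card S * p := by
    rw [← hcardG, hcount, mul_comm]
    exact Nat.mul_le_mul hrange hker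
  exact (Nat.le_of_mul_le_mul_right this hp.out.pos).not_gt hSK

end

theorem eq_bot_of_odd_card (hodd : Odd (Nat.card G)) : S = ⊥ := by
  obtain ⟨p, hp, hG⟩ := hP.exists_isPGroup hpc
  have : Fact p.Prime := ⟨hp⟩
  exact hP.eq_bot_of_isPGroup hpc hG hodd

end IsESPartition

end

theorem minimal_noncyclic_of_odd_EFPartition_general {G : Type*} [Group G] [Finite G]
    (hodd : Odd (Nat.card G))
    (hF : ∃ F : Subgroup G, F ≠ ⊥ ∧
      ∀ H : Subgroup G, H ≠ ⊤ → ¬ IsCyclic H →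
        F ≤ H ∧ ∃ P : Finset (Subgroup H), IsESPartition (F.subgroupOf H) P) :
    ∀ H : Subgroup G, H ≠ ⊤ → IsCyclic H := by
  obtain ⟨F, hF, hpart⟩ := hF
  intro H
  induction H using WellFoundedLT.induction with
  | _ H ih =>
    intro hH
    by_contra hnc
    obtain ⟨hFH, P, hP⟩ := hpart H hH hnc
    have hpc (Q : Subgroup H) (hQ : Q ≠ ⊤) : IsCyclic Q := by
      have hlt : Q.map H.subtype < H := (map_subtype_lt_map_subtype.mpr hQ.lt_top).trans_eq
        (by rw [← MonoidHom.range_eq_map, range_subtype])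
      exact (Q.equivMapOfInjective _ H.subtype_injective).isCyclic.mpr
        (ih _ hlt (hlt.trans_le le_top).ne)
    have hodd' : Odd (Nat.card H) := hodd.of_dvd_nat H.card_subgroup_dvd_card
    exact hF ((subgroupOf_eq_bot.mp (hP.eq_bot_of_odd_card hpc hodd')).eq_bot_of_le hFH)

theorem minimal_noncyclic_of_odd_EFPartition {G : Type*} [Group G] [Finite G]
    (hodd : Odd (Nat.card G)) (hnc : ¬ IsCyclic G)
    (hF : ∃ F : Subgroup G, F ≠ ⊥ ∧
      ∀ H : Subgroup G, H ≠ ⊤ → ¬ IsCyclic H →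
        F ≤ H ∧ ∃ P : Finset (Subgroup H), IsESPartition (F.subgroupOf H) P) :
    ∀ H : Subgroup G, H ≠ ⊤ → IsCyclic H :=
  minimal_noncyclic_of_odd_EFPartition_general hodd hF
end
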